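/- Let (G,X) be a strongly marked group with Property D. Let x, y ∈ X with x ≠ y, a, b nonzero exponents, and m ≥ 3 even. If xy ≠ yx, \overline{[x^a,y^b]}_m = \overline{[y^b,x^a]}_m and lg_{S(X)}(\overline{[x^a,y^b]}_m) = m, then o(x) = o(y) = 2 and a = b = 1. -/

import Mathlib

namespace Paper

/-- The alternating list `(a, b, a, b, ...)` of length `m`. -/
def altList {α : Type*} (a b : α) : ℕ → List α
  | 0 => []
  | n + 1 => a :: altList b a n

/-- The alternating product `a b a ⋯` of length `m` in a monoid. -/
def altProd {G : Type*} [Monoid G] (a b : G) (m : ℕ) : G := (altList a b m).prod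

variable {G : Type*} [Group G]

/-- The set of syllables of a generating set `X`: nontrivial powers of elements of `X`. -/
def Syll (X : Set G) : Set G := {s | ∃ x ∈ X, ∃ a : ℤ, s = x ^ a ∧ s ≠ 1}

/-- A syllabic word: a list all of whose entries are syllables. -/
def SylWord (X : Set G) (w : List G) : Prop := ∀ s ∈ w, s ∈ Syll X

/-- The syllabic length of an element: minimal length of a syllabic word representing it. -/
noncomputable def sylLen (X : Set G) (g : G) : ℕ :=
  sInf {n | ∃ w : List G, SylWord X w ∧ w.prod = g ∧ w.length = n}

/-- A syllabic word is reduced if its length is the syllabic length of the element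
it represents. -/
def Reduced (X : Set G) (w : List G) : Prop :=
  SylWord X w ∧ w.length = sylLen X w.prod

/-- Elementary M-operation of type I. -/
def MOpI (X : Set G) (w w' : List G) : Prop :=
  ∃ (w₁ w₂ : List G) (s t : G), s ∈ Syll X ∧ t ∈ Syll X ∧
    w = w₁ ++ [s, t] ++ w₂ ∧
    ((s * t ∈ Syll X ∧ w' = w₁ ++ [s * t] ++ w₂) ∨ (s * t = 1 ∧ w' = w₁ ++ w₂))

/-- Elementary M-operation of type II. -/
def MOpII (X : Set G) (w w' : List G) : Prop :=
  ∃ (w₁ w₂ : List G) (s t : G) (m : ℕ), s ∈ Syll X ∧ t ∈ Syll X ∧ 2 ≤ m ∧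
    altProd s t m = altProd t s m ∧ sylLen X (altProd s t m) = m ∧
    w = w₁ ++ altList s t m ++ w₂ ∧ w' = w₁ ++ altList t s m ++ w₂

/-- Elementary M-operation (of type I or type II). -/
def MOp (X : Set G) (w w' : List G) : Prop := MOpI X w w' ∨ MOpII X w w'

/-- A syllabic word is M-reduced if its length cannot be shortened by any finite
sequence of elementary M-operations. -/
def MReduced (X : Set G) (w : List G) : Prop :=
  ∀ w', Relation.ReflTransGen (MOp X) w w' → ¬ w'.length < w.length

/-- Property D: a syllabic word is reduced iff it is M-reduced, and any two reduced
syllabic words representing the same element are connected by a finite sequence of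
elementary M-operations of type II. -/
def PropertyD (X : Set G) : Prop :=
  (∀ w : List G, SylWord X w → (Reduced X w ↔ MReduced X w)) ∧
  (∀ w w' : List G, Reduced X w → Reduced X w' → w.prod = w'.prod →
    Relation.ReflTransGen (MOpII X) w w')

/-- `(G, X)` is a marked group: `X` generates `G`. -/
def Marked (X : Set G) : Prop := Subgroup.closure X = ⊤

/-- `(G, X)` is a strongly marked group. -/
def StronglyMarked (X : Set G) : Prop :=
  Marked X ∧ (1 : G) ∉ X ∧
    ∀ x ∈ X, ∀ y ∈ X, ∀ a b : ℤ, x ^ a ≠ 1 → y ^ b ≠ 1 →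
      (x ^ a * y ^ b ∈ Syll X ∨ x ^ a * y ^ b = 1) → x = y

/-- The data of a Dyer graph: a simplicial graph with edge labels `m ≥ 2` and vertex
labels `f ∈ ℕ_{≥2} ∪ {∞}` such that any edge with `m(e) ≠ 2` has both endpoints
labelled `2`. -/
structure DyerData (V : Type*) where
  adj : V → V → Prop
  symm : ∀ u v, adj u v → adj v u
  loopless : ∀ v, ¬ adj v v
  m : V → V → ℕ
  m_symm : ∀ u v, m u v = m v u
  m_two_le : ∀ u v, adj u v → 2 ≤ m u v
  f : V → ℕ∞
  f_two_le : ∀ v, 2 ≤ f v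
  dyer : ∀ u v, adj u v → m u v ≠ 2 → f u = 2 ∧ f v = 2

/-- The defining relators of the Dyer group of `Δ`. -/
def DyerData.rels {V : Type*} (Δ : DyerData V) : Set (FreeGroup V) :=
  {r | ∃ v, Δ.f v ≠ ⊤ ∧ r = (FreeGroup.of v) ^ (Δ.f v).toNat} ∪
  {r | ∃ u v, Δ.adj u v ∧
    r = altProd (FreeGroup.of u) (FreeGroup.of v) (Δ.m u v) *
        (altProd (FreeGroup.of v) (FreeGroup.of u) (Δ.m u v))⁻¹}

/-- The Dyer group of the data `Δ`. -/
abbrev DyerGroup {V : Type*} (Δ : DyerData V) := PresentedGroup Δ.rels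

/-- The standard generating set of a Dyer group. -/
def DyerGens {V : Type*} (Δ : DyerData V) : Set (DyerGroup Δ) :=
  Set.range (PresentedGroup.of (rels := Δ.rels))

/-! Write `s = x ^ a`, `t = y ^ b` and `g = s t s ⋯ = t s t ⋯` (`m` letters). In a reduced word
over `⟨x⟩ ∪ ⟨y⟩` a type II operation can only flip the whole word; hence the two alternating
words are the only reduced words of `g`, and a reduced word with a third letter is the only
reduced word of its element. Comparing the
reduced words `s² t s ⋯ t` and `t s ⋯ t s²` of `g s = s g` gives `s² = 1`. If moreover
`x^(a+1) ≠ 1`, the words `x^(a+1) t s ⋯ t x⁻¹` and `x t s ⋯ t x^(a-1)` of `x g x⁻¹` contradict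
Property D whichever syllabic length `x g x⁻¹` has. So `x^(2a) = x^(a+1) = 1`, i.e. `x` has
order `2` and `a` is odd, and symmetrically for `y`. -/

section AltList

variable {α : Type*}

@[simp] theorem altList_length (a b : α) (n : ℕ) : (altList a b n).length = n := by
  induction n generalizing a b with
  | zero => rfl
  | succ n ih => simp [altList, ih]

theorem forall_mem_altList {p : α → Prop} {a b : α} (ha : p a) (hb : p b) (n : ℕ) :
    ∀ e ∈ altList a b n, p e := by
  induction n generalizing a b with
  | zero => simp [altList]
  | succ n ih => simpa [altList, ha] using ih hb ha

theorem mem_altList {a b e : α} {n : ℕ} (he : e ∈ altList a b n) : e = a ∨ e = b :=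
  forall_mem_altList (p := fun e => e = a ∨ e = b) (.inl rfl) (.inr rfl) n e he

theorem left_mem_altList (a b : α) {n : ℕ} (hn : 1 ≤ n) : a ∈ altList a b n := by
  obtain ⟨n, rfl⟩ := Nat.exists_eq_add_of_le' hn
  simp [altList]

theorem right_mem_altList (a b : α) {n : ℕ} (hn : 2 ≤ n) : b ∈ altList a b n := by
  obtain ⟨n, rfl⟩ := Nat.exists_eq_add_of_le' hn
  simp [altList]

theorem altList_inj {a b a' b' : α} {k : ℕ} (hk : 2 ≤ k)
    (h : altList a b k = altList a' b' k) : a = a' ∧ b = b' := by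
  obtain ⟨k, rfl⟩ := Nat.exists_eq_add_of_le' hk
  simp only [altList, List.cons.injEq] at h
  exact ⟨h.1, h.2.1⟩

theorem altList_eq_cons_of_pos {n : ℕ} (hn : 0 < n) (a b : α) :
    altList a b n = a :: altList b a (n - 1) := by
  obtain ⟨n, rfl⟩ := Nat.exists_eq_add_of_le' hn
  rfl

theorem altList_succ_of_even {n : ℕ} (hn : Even n) (a b : α) :
    altList a b (n + 1) = altList a b n ++ [a] := by
  obtain ⟨n, rfl⟩ := hn
  induction n generalizing a b with
  | zero => rfl
  | succ n ih =>
    rw [show n + 1 + (n + 1) = n + n + 2 by omega]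
    change a :: b :: altList a b (n + n + 1) = a :: b :: altList a b (n + n) ++ [a]
    rw [ih]
    rfl

theorem altList_succ_of_odd {n : ℕ} (hn : ¬ Even n) (a b : α) :
    altList a b (n + 1) = altList a b n ++ [b] := by
  obtain ⟨n, rfl⟩ : ∃ k, n = k + 1 := ⟨n - 1, by grind⟩
  rw [altList, altList_succ_of_even (by simpa [Nat.even_add_one] using hn)]
  rfl

theorem exists_altList_eq_append {a b : α} {k n : ℕ} (h : k ≤ n) :
    ∃ R, altList a b n = altList a b k ++ R := by
  induction k generalizing a b n with
  | zero => exact ⟨_, rfl⟩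
  | succ k ih =>
    obtain ⟨n, rfl⟩ := Nat.exists_eq_add_of_le' (show 1 ≤ n by omega)
    obtain ⟨R, hR⟩ := ih (a := b) (b := a) (show k ≤ n by omega)
    exact ⟨R, by simp [altList, hR]⟩

theorem altList_eq_append_pair {k : ℕ} (hk : 2 ≤ k) (a b : α) :
    ∃ P P' p q, altList a b k = P ++ [p, q] ∧ altList b a k = P' ++ [q, p] := by
  obtain ⟨k, rfl⟩ := Nat.exists_eq_add_of_le' hk
  clear hk
  induction k generalizing a b with
  | zero => exact ⟨[], [], a, b, rfl, rfl⟩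
  | succ k ih =>
    obtain ⟨P, P', p, q, h, h'⟩ := ih b a
    exact ⟨a :: P, b :: P', p, q, by simp [altList, ← h], by simp [altList, ← h']⟩

theorem altList_eq_append_triple (a b : α) (n : ℕ) :
    ∃ P e f, altList a b (n + 3) = P ++ [e, f, e] := by
  induction n generalizing a b with
  | zero => exact ⟨[], a, b, rfl⟩
  | succ n ih =>
    obtain ⟨P, e, f, h⟩ := ih b a
    exact ⟨a :: P, e, f, by rw [show n + 1 + 3 = n + 3 + 1 by omega, altList, h]; rfl⟩

theorem pair_eq_of_altList_eq_append {u v s t : α} {N k : ℕ} {w₁ w₂ : List α} (hk : 2 ≤ k)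
    (h : altList u v N = w₁ ++ altList s t k ++ w₂) : s = u ∧ t = v ∨ s = v ∧ t = u := by
  obtain ⟨k, rfl⟩ := Nat.exists_eq_add_of_le' hk
  induction w₁ generalizing u v N with
  | nil =>
    obtain ⟨N, rfl⟩ : ∃ N', N = N' + 2 := ⟨N - 2, by
      have := congrArg List.length h; simp at this; omega⟩
    simp only [altList, List.nil_append, List.cons_append, List.cons.injEq] at h
    exact .inl ⟨h.1.symm, h.2.1.symm⟩
  | cons e w₁ ih =>
    obtain ⟨N, rfl⟩ : ∃ N', N = N' + 1 := ⟨N - 1, by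
      have := congrArg List.length h; simp at this; omega⟩
    simp only [altList, List.cons_append, List.cons.injEq] at h
    exact (ih h.2).symm

theorem segment_cases_of_eq_cons_altList_append {h l u v s t : α} {N k : ℕ}
    {w₁ w₂ : List α} (hN : 2 ≤ N) (hk : 2 ≤ k) (hh : h ∉ altList u v N)
    (hl : l ∉ altList u v N) (heq : h :: (altList u v N ++ [l]) = w₁ ++ altList s t k ++ w₂) :
    (k ≤ N ∧ (s = u ∧ t = v ∨ s = v ∧ t = u)) ∨ (k = 2 ∧ s = h ∧ t = u) ∨
      (k = 2 ∧ t = l ∧ ∃ L₀, altList u v N = L₀ ++ [s]) := by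
  rcases w₁ with _ | ⟨e, w₁⟩
  · obtain ⟨N, rfl⟩ := Nat.exists_eq_add_of_le' hN
    obtain ⟨k, rfl⟩ := Nat.exists_eq_add_of_le' hk
    rcases k with _ | k
    · simp only [altList, List.nil_append, List.cons_append, List.cons.injEq] at heq
      exact .inr (.inl ⟨rfl, heq.1.symm, heq.2.1.symm⟩)
    · simp only [altList, List.nil_append, List.cons_append, List.cons.injEq] at heq
      exact absurd (heq.1.trans heq.2.2.1.symm ▸ right_mem_altList u v (by omega)) hh
  · simp only [List.cons_append, List.cons.injEq] at heq
    obtain ⟨-, heq⟩ := heq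
    rcases List.eq_nil_or_concat' w₂ with rfl | ⟨w₂, f, rfl⟩
    · obtain ⟨k, rfl⟩ := Nat.exists_eq_add_of_le' hk
      rcases k with _ | k
      · have heq' : altList u v N ++ [l] = (w₁ ++ [s]) ++ [t] := by simpa [altList] using heq
        obtain ⟨hL, hl'⟩ := List.append_inj' heq' rfl
        exact .inr (.inr ⟨rfl, (List.singleton_inj.mp hl').symm, _, hL⟩)
      · obtain ⟨P, e', f', hP⟩ := altList_eq_append_triple s t k
        have heq' : altList u v N ++ [l] = (w₁ ++ P ++ [e', f']) ++ [e'] := by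
          rw [heq, show k + 1 + 2 = k + 3 by omega, hP]; simp
        obtain ⟨hL, hl'⟩ := List.append_inj' heq' rfl
        exact absurd (by rw [hL, List.singleton_inj.mp hl']; simp) hl
    · have heq' : altList u v N ++ [l] = (w₁ ++ altList s t k ++ w₂) ++ [f] := by
        simpa using heq
      obtain ⟨hL, -⟩ := List.append_inj' heq' rfl
      have hlen := congrArg List.length hL
      simp only [List.length_append, altList_length] at hlen
      exact .inl ⟨by omega, pair_eq_of_altList_eq_append hk hL⟩

theorem ne_altList_of_mem {W : List α} {p q r : α} (hp : p ∈ W) (hq : q ∈ W) (hr : r ∈ W)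
    (hpq : p ≠ q) (hpr : p ≠ r) (hqr : q ≠ r) (s t : α) (k : ℕ) : W ≠ altList s t k := by
  rintro rfl
  rcases mem_altList hp with rfl | rfl <;> rcases mem_altList hq with rfl | rfl <;>
    rcases mem_altList hr with rfl | rfl <;> contradiction

end AltList

open Subgroup (zpowers mem_zpowers mem_zpowers_iff zpow_mem_zpowers)

section Syllables

variable {X : Set G}

theorem zpow_mem_syll {x : G} (hx : x ∈ X) {n : ℤ} (h : x ^ n ≠ 1) : x ^ n ∈ Syll X :=
  ⟨x, hx, n, rfl, h⟩

theorem inv_mem_syll {s : G} (hs : s ∈ Syll X) : s⁻¹ ∈ Syll X := by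
  obtain ⟨x, hx, n, rfl, h⟩ := hs
  exact ⟨x, hx, -n, by rw [zpow_neg], by simpa using h⟩

@[simp] theorem sylWord_nil : SylWord X [] := by simp [SylWord]

@[simp] theorem sylWord_cons {e : G} {w : List G} :
    SylWord X (e :: w) ↔ e ∈ Syll X ∧ SylWord X w :=
  List.forall_mem_cons

@[simp] theorem sylWord_append {v w : List G} :
    SylWord X (v ++ w) ↔ SylWord X v ∧ SylWord X w :=
  List.forall_mem_append

theorem sylLen_le_length {w : List G} (hw : SylWord X w) : sylLen X w.prod ≤ w.length :=
  Nat.sInf_le ⟨w, hw, rfl, rfl⟩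

theorem exists_reduced {w : List G} (hw : SylWord X w) :
    ∃ r, Reduced X r ∧ r.prod = w.prod := by
  have hne : {n | ∃ r : List G, SylWord X r ∧ r.prod = w.prod ∧ r.length = n}.Nonempty :=
    ⟨_, w, hw, rfl, rfl⟩
  obtain ⟨r, hr, hp, hl⟩ := Nat.sInf_mem hne
  exact ⟨r, ⟨hr, hp ▸ hl⟩, hp⟩

theorem reduced_of_length_le {w : List G} (hw : SylWord X w)
    (h : w.length ≤ sylLen X w.prod) : Reduced X w :=
  ⟨hw, le_antisymm h (sylLen_le_length hw)⟩

theorem exists_reduced_inv_cons {g h : G} {v : List G} (hh : h ∈ Syll X) (hv : SylWord X v)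
    (hvp : v.prod = h * g) (hlt : sylLen X (h * g) < sylLen X g) :
    ∃ r, Reduced X (h⁻¹ :: r) ∧ (h⁻¹ :: r).prod = g := by
  obtain ⟨r, hr, hrp⟩ := exists_reduced hv
  have hp : (h⁻¹ :: r).prod = g := by simp [hrp, hvp]
  refine ⟨r, reduced_of_length_le (sylWord_cons.2 ⟨inv_mem_syll hh, hr.1⟩) ?_, hp⟩
  rw [hp, List.length_cons, hr.2, hrp, hvp]
  omega

theorem exists_reduced_concat_inv {g h : G} {v : List G} (hh : h ∈ Syll X) (hv : SylWord X v)
    (hvp : v.prod = g * h) (hlt : sylLen X (g * h) < sylLen X g) :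
    ∃ r, Reduced X (r ++ [h⁻¹]) ∧ (r ++ [h⁻¹]).prod = g := by
  obtain ⟨r, hr, hrp⟩ := exists_reduced hv
  have hp : (r ++ [h⁻¹]).prod = g := by simp [hrp, hvp]
  refine ⟨r, reduced_of_length_le (sylWord_append.2 ⟨hr.1, by simp [inv_mem_syll hh]⟩) ?_, hp⟩
  rw [hp, List.length_append, hr.2, hrp, hvp, List.length_singleton]
  omega

theorem reduced_of_forall_inv_cons_ne {g h : G} {v : List G} (hh : h ∈ Syll X)
    (hv : SylWord X v) (hvp : v.prod = h * g) (hlen : v.length = sylLen X g)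
    (hne : ∀ r, Reduced X (h⁻¹ :: r) → (h⁻¹ :: r).prod ≠ g) : Reduced X v := by
  refine reduced_of_length_le hv (not_lt.1 fun hlt => ?_)
  obtain ⟨r, hr, hp⟩ := exists_reduced_inv_cons hh hv hvp (by rwa [← hvp, ← hlen])
  exact hne r hr hp

theorem reduced_of_forall_concat_inv_ne {g h : G} {v : List G} (hh : h ∈ Syll X)
    (hv : SylWord X v) (hvp : v.prod = g * h) (hlen : v.length = sylLen X g)
    (hne : ∀ r, Reduced X (r ++ [h⁻¹]) → (r ++ [h⁻¹]).prod ≠ g) : Reduced X v := by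
  refine reduced_of_length_le hv (not_lt.1 fun hlt => ?_)
  obtain ⟨r, hr, hp⟩ := exists_reduced_concat_inv hh hv hvp (by rwa [← hvp, ← hlen])
  exact hne r hr hp

theorem exists_sylWord_of_mem_zpowers {x u : G} (hx : x ∈ X) (hu : u ∈ zpowers x) :
    ∃ w, SylWord X w ∧ w.prod = u ∧ w.length ≤ 1 := by
  obtain ⟨n, rfl⟩ := mem_zpowers_iff.1 hu
  by_cases h : x ^ n = 1
  · exact ⟨[], by simp, by simp [h], by simp⟩
  · exact ⟨[x ^ n], by simp [zpow_mem_syll hx h], by simp, by simp⟩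

theorem sylLen_mul_le_two {x y u v : G} (hx : x ∈ X) (hy : y ∈ X) (hu : u ∈ zpowers x)
    (hv : v ∈ zpowers y) : sylLen X (u * v) ≤ 2 := by
  obtain ⟨w₁, h₁, rfl, l₁⟩ := exists_sylWord_of_mem_zpowers hx hu
  obtain ⟨w₂, h₂, rfl, l₂⟩ := exists_sylWord_of_mem_zpowers hy hv
  have := sylLen_le_length (sylWord_append.2 ⟨h₁, h₂⟩)
  simp only [List.prod_append, List.length_append] at this
  omega

theorem altProd_succ (s t : G) (n : ℕ) : altProd s t (n + 1) = s * altProd t s n := by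
  simp [altProd, altList]

theorem altProd_eq_pow_mul_pow_of_commute {s t : G} (h : Commute s t) (n : ℕ) :
    ∃ i j : ℕ, altProd s t n = s ^ i * t ^ j := by
  induction n generalizing s t with
  | zero => exact ⟨0, 0, by simp [altProd, altList]⟩
  | succ n ih =>
    obtain ⟨i, j, hij⟩ := ih h.symm
    refine ⟨j + 1, i, ?_⟩
    rw [altProd_succ, hij, ← (h.pow_pow j i).eq, ← mul_assoc, ← pow_succ']

theorem sylLen_altProd_le_two_of_commute {x y s t : G} (hx : x ∈ X) (hy : y ∈ X)
    (hs : s ∈ zpowers x) (ht : t ∈ zpowers y) (h : Commute s t) (n : ℕ) :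
    sylLen X (altProd s t n) ≤ 2 := by
  obtain ⟨i, j, hij⟩ := altProd_eq_pow_mul_pow_of_commute h n
  rw [hij]
  exact sylLen_mul_le_two hx hy (pow_mem hs i) (pow_mem ht j)

theorem StronglyMarked.ne_one (hSM : StronglyMarked X) {x : G} (hx : x ∈ X) : x ≠ 1 :=
  fun h => hSM.2.1 (h ▸ hx)

theorem StronglyMarked.not_mergeable (hSM : StronglyMarked X) {x y : G} (hx : x ∈ X)
    (hy : y ∈ X) (hxy : x ≠ y) {α β : ℤ} (hα : x ^ α ≠ 1) (hβ : y ^ β ≠ 1) :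
    ¬ (x ^ α * y ^ β ∈ Syll X ∨ x ^ α * y ^ β = 1) :=
  fun h => hxy (hSM.2.2 x hx y hy α β hα hβ h)

theorem StronglyMarked.zpow_ne_zpow (hSM : StronglyMarked X) {x y : G} (hx : x ∈ X)
    (hy : y ∈ X) (hxy : x ≠ y) {α β : ℤ} (hα : x ^ α ≠ 1) (hβ : y ^ β ≠ 1) :
    x ^ α ≠ y ^ β := by
  intro h
  refine hSM.not_mergeable hx hy hxy hα (β := -β) (by rwa [zpow_neg, inv_ne_one]) (.inr ?_)
  rw [h, zpow_neg, mul_inv_cancel]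

end Syllables

section MOperations

variable {X : Set G}

def Braids (X : Set G) (s t : G) (k : ℕ) : Prop :=
  altProd s t k = altProd t s k ∧ sylLen X (altProd s t k) = k

theorem Braids.symm {s t : G} {k : ℕ} (h : Braids X s t k) : Braids X t s k :=
  ⟨h.1.symm, by rw [← h.1]; exact h.2⟩

theorem Braids.commute {s t : G} (h : Braids X s t 2) : Commute s t := by
  have h₁ := h.1
  simp only [altProd, altList, List.prod_cons, List.prod_nil, mul_one] at h₁
  exact h₁

theorem Reduced.not_mergeable (hPD : PropertyD X) {w₁ w₂ : List G} {p q : G}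
    (hW : Reduced X (w₁ ++ [p, q] ++ w₂)) : ¬ (p * q ∈ Syll X ∨ p * q = 1) := by
  have hp : p ∈ Syll X := hW.1 p (by simp)
  have hq : q ∈ Syll X := hW.1 q (by simp)
  have hM := (hPD.1 _ hW.1).1 hW
  rintro (h | h)
  · exact hM _ (.single (.inl ⟨w₁, w₂, p, q, hp, hq, rfl, .inl ⟨h, rfl⟩⟩)) (by simp)
  · exact hM _ (.single (.inl ⟨w₁, w₂, p, q, hp, hq, rfl, .inr ⟨h, rfl⟩⟩)) (by simp)

theorem Reduced.not_infix_zpowers (hPD : PropertyD X) {W : List G} {z p q : G}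
    (hW : Reduced X W) (hz : z ∈ X) (hpq : [p, q] <:+: W) (hp : p ∈ zpowers z)
    (hq : q ∈ zpowers z) : False := by
  obtain ⟨w₁, w₂, rfl⟩ := hpq
  obtain ⟨n, hn⟩ := mem_zpowers_iff.1 (mul_mem hp hq)
  refine hW.not_mergeable hPD ?_
  by_cases h : p * q = 1
  · exact .inr h
  · exact .inl ⟨z, hz, n, hn.symm, h⟩

theorem Reduced.of_MOpII {W W' : List G} (hW : Reduced X W) (hop : MOpII X W W') :
    Reduced X W' := by
  obtain ⟨w₁, w₂, s, t, k, hs, ht, -, hb, -, rfl, rfl⟩ := hop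
  have hsyl : SylWord X (w₁ ++ altList s t k ++ w₂) := hW.1
  have hlen := hW.2
  simp only [sylWord_append] at hsyl
  refine ⟨by simpa using ⟨hsyl.1.1, forall_mem_altList ht hs k, hsyl.2⟩, ?_⟩
  simp only [List.prod_append, List.length_append, altList_length] at hlen ⊢
  rwa [show (altList t s k).prod = (altList s t k).prod from hb.symm]

theorem Reduced.false_of_three_letters (hPD : PropertyD X) {W W' : List G} {x y p q r : G}
    (hx : x ∈ X) (hy : y ∈ X) (hW : Reduced X W) (hW' : Reduced X W')
    (hp : p ∈ zpowers x ∨ p ∈ zpowers y) (hq : q ∈ zpowers x ∨ q ∈ zpowers y)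
    (hr : r ∈ zpowers x ∨ r ∈ zpowers y) (hpq : [p, q] <:+: W) (hqr : [q, r] <:+: W)
    (hpr : [p, r] <:+: W') : False := by
  rcases hp with hp | hp <;> rcases hq with hq | hq <;> rcases hr with hr | hr <;>
    first
    | exact hW.not_infix_zpowers hPD hx hpq hp hq
    | exact hW.not_infix_zpowers hPD hy hpq hp hq
    | exact hW.not_infix_zpowers hPD hx hqr hq hr
    | exact hW.not_infix_zpowers hPD hy hqr hq hr
    | exact hW'.not_infix_zpowers hPD hx hpr hp hr
    | exact hW'.not_infix_zpowers hPD hy hpr hp hr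

/-- In a reduced word over `⟨x⟩ ∪ ⟨y⟩` consecutive letters lie in different cyclic groups, so a
letter next to a flipped segment would end up beside a letter of its own group. -/
theorem MOpII.eq_altList_of_reduced (hPD : PropertyD X) {W W' : List G} {x y : G}
    (hx : x ∈ X) (hy : y ∈ X) (hWxy : ∀ e ∈ W, e ∈ zpowers x ∨ e ∈ zpowers y)
    (hW : Reduced X W) (hop : MOpII X W W') : ∃ s t k, W = altList s t k ∧ W' = altList t s k := by
  have hW' := hW.of_MOpII hop
  obtain ⟨w₁, w₂, s, t, k, -, -, hk, -, -, rfl, rfl⟩ := hop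
  have three : ∀ {p q r}, p ∈ w₁ ++ altList s t k ++ w₂ → q ∈ w₁ ++ altList s t k ++ w₂ →
      r ∈ w₁ ++ altList s t k ++ w₂ → [p, q] <:+: w₁ ++ altList s t k ++ w₂ →
      [q, r] <:+: w₁ ++ altList s t k ++ w₂ → [p, r] <:+: w₁ ++ altList t s k ++ w₂ → False :=
    fun hp hq hr => hW.false_of_three_letters hPD hx hy hW' (hWxy _ hp) (hWxy _ hq) (hWxy _ hr)
  obtain ⟨P, P', p, q, hP, hP'⟩ := altList_eq_append_pair hk s t
  obtain ⟨k, rfl⟩ := Nat.exists_eq_add_of_le' hk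
  rcases List.eq_nil_or_concat' w₁ with rfl | ⟨w₀, e, rfl⟩
  · rcases w₂ with _ | ⟨f, w₂⟩
    · exact ⟨s, t, k + 2, by simp, by simp⟩
    · exact (three (p := p) (q := q) (r := f) (by simp [hP]) (by simp [hP]) (by simp)
        ⟨P, f :: w₂, by simp [hP]⟩ ⟨P ++ [p], w₂, by simp [hP]⟩
        ⟨P' ++ [q], w₂, by simp [hP']⟩).elim
  · exact (three (p := e) (q := s) (r := t) (by simp) (by simp [altList]) (by simp [altList])
      ⟨w₀, t :: altList s t k ++ w₂, by simp [altList]⟩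
      ⟨w₀ ++ [e], altList s t k ++ w₂, by simp [altList]⟩
      ⟨w₀, s :: altList t s k ++ w₂, by simp [altList]⟩).elim

theorem Reduced.eq_of_prod_eq (hPD : PropertyD X) {W r : List G} {x y : G} (hx : x ∈ X)
    (hy : y ∈ X) (hWxy : ∀ e ∈ W, e ∈ zpowers x ∨ e ∈ zpowers y) (hW : Reduced X W)
    (hne : ∀ s t k, W ≠ altList s t k) (hr : Reduced X r) (hp : r.prod = W.prod) : r = W := by
  rcases (hPD.2 W r hW hr hp.symm).cases_head with h | ⟨z, hz, -⟩
  · exact h.symm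
  · obtain ⟨s, t, k, h, -⟩ := hz.eq_altList_of_reduced hPD hx hy hWxy hW
    exact absurd h (hne s t k)

/-- A braid relation of length `k < m` could be applied right after the first letter of the
reduced word `s t s ⋯`, producing two adjacent powers of one generator. -/
theorem not_braids_of_lt (hPD : PropertyD X) {z s t : G} {m k : ℕ} (hz : z ∈ X)
    (hs : s ∈ zpowers z) (hred : Reduced X (altList s t m)) (hk : 2 ≤ k) (hkm : k < m) :
    ¬ Braids X t s k := by
  intro hb
  obtain ⟨m, rfl⟩ := Nat.exists_eq_add_of_le' (show 1 ≤ m by omega)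
  obtain ⟨R, hR⟩ := exists_altList_eq_append (a := t) (b := s) (show k ≤ m by omega)
  have hop : MOpII X (altList s t (m + 1)) ([s] ++ altList s t k ++ R) :=
    ⟨[s], R, t, s, k, hred.1 t (right_mem_altList _ _ (by omega)),
      hred.1 s (left_mem_altList _ _ (by omega)), hk, hb.1, hb.2,
      by simp [altList, hR], rfl⟩
  obtain ⟨k, rfl⟩ := Nat.exists_eq_add_of_le' hk
  exact (hred.of_MOpII hop).not_infix_zpowers hPD hz
    ⟨[], t :: altList s t k ++ R, by simp [altList]⟩ hs hs

theorem MOpII.eq_altList_swap (hPD : PropertyD X) {s t x y : G} {m : ℕ} {W' : List G}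
    (hx : x ∈ X) (hy : y ∈ X) (hs : s ∈ zpowers x ∨ s ∈ zpowers y)
    (ht : t ∈ zpowers x ∨ t ∈ zpowers y) (hm : 2 ≤ m) (hred : Reduced X (altList s t m))
    (hop : MOpII X (altList s t m) W') : W' = altList t s m := by
  obtain ⟨s', t', k, hW, rfl⟩ :=
    hop.eq_altList_of_reduced hPD hx hy
      (forall_mem_altList (p := fun e => e ∈ zpowers x ∨ e ∈ zpowers y) hs ht m) hred
  obtain rfl : k = m := by simpa using (congrArg List.length hW).symm
  obtain ⟨rfl, rfl⟩ := altList_inj hm hW.symm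
  rfl

end MOperations

structure BraidSetting (X : Set G) (x y : G) (a b : ℤ) (m : ℕ) : Prop where
  stronglyMarked : StronglyMarked X
  propertyD : PropertyD X
  mem_left : x ∈ X
  mem_right : y ∈ X
  ne : x ≠ y
  zpow_left_ne_one : x ^ a ≠ 1
  zpow_right_ne_one : y ^ b ≠ 1
  three_le : 3 ≤ m
  even : Even m
  braids : Braids X (x ^ a) (y ^ b) m

namespace BraidSetting

variable {X : Set G} {x y : G} {a b : ℤ} {m : ℕ}

theorem swap (H : BraidSetting X x y a b m) : BraidSetting X y x b a m :=
  ⟨H.stronglyMarked, H.propertyD, H.mem_right, H.mem_left, H.ne.symm, H.zpow_right_ne_one,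
    H.zpow_left_ne_one, H.three_le, H.even, H.braids.symm⟩

theorem ne_one (H : BraidSetting X x y a b m) : x ≠ 1 :=
  H.stronglyMarked.ne_one H.mem_left

theorem mem_syll (H : BraidSetting X x y a b m) : x ∈ Syll X :=
  ⟨x, H.mem_left, 1, (zpow_one x).symm, H.ne_one⟩

theorem zpow_left_mem_syll (H : BraidSetting X x y a b m) : x ^ a ∈ Syll X :=
  zpow_mem_syll H.mem_left H.zpow_left_ne_one

theorem zpow_ne_zpow (H : BraidSetting X x y a b m) {α β : ℤ} (hα : x ^ α ≠ 1)
    (hβ : y ^ β ≠ 1) : x ^ α ≠ y ^ β :=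
  H.stronglyMarked.zpow_ne_zpow H.mem_left H.mem_right H.ne hα hβ

theorem not_mergeable (H : BraidSetting X x y a b m) {α β : ℤ} (hα : x ^ α ≠ 1)
    (hβ : y ^ β ≠ 1) : ¬ (x ^ α * y ^ β ∈ Syll X ∨ x ^ α * y ^ β = 1) :=
  H.stronglyMarked.not_mergeable H.mem_left H.mem_right H.ne hα hβ

theorem reduced_altList (H : BraidSetting X x y a b m) :
    Reduced X (altList (x ^ a) (y ^ b) m) :=
  ⟨forall_mem_altList H.zpow_left_mem_syll H.swap.zpow_left_mem_syll m, by
    rw [altList_length]; exact H.braids.2.symm⟩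

theorem eq_of_reduced (H : BraidSetting X x y a b m) {r : List G} (hr : Reduced X r)
    (hp : r.prod = altProd (x ^ a) (y ^ b) m) :
    r = altList (x ^ a) (y ^ b) m ∨ r = altList (y ^ b) (x ^ a) m := by
  have hm : 2 ≤ m := by have := H.three_le; omega
  have hs : x ^ a ∈ zpowers x ∨ x ^ a ∈ zpowers y := .inl (zpow_mem_zpowers x a)
  have ht : y ^ b ∈ zpowers x ∨ y ^ b ∈ zpowers y := .inr (zpow_mem_zpowers y b)
  have hchain := H.propertyD.2 _ r H.reduced_altList hr hp.symm
  clear hr hp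
  induction hchain with
  | refl => exact .inl rfl
  | tail _ hop ih =>
    rcases ih with rfl | rfl
    · exact .inr (hop.eq_altList_swap H.propertyD H.mem_left H.mem_right hs ht hm
        H.reduced_altList)
    · exact .inl (hop.eq_altList_swap H.propertyD H.mem_left H.mem_right ht hs hm
        H.swap.reduced_altList)

theorem altList_eq_cons (H : BraidSetting X x y a b m) :
    altList (x ^ a) (y ^ b) m = x ^ a :: altList (y ^ b) (x ^ a) (m - 1) :=
  altList_eq_cons_of_pos (by have := H.three_le; omega) _ _

theorem altList_eq_concat (H : BraidSetting X x y a b m) :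
    altList (x ^ a) (y ^ b) m = altList (x ^ a) (y ^ b) (m - 1) ++ [y ^ b] := by
  have h := altList_succ_of_odd (n := m - 1) (by
    have := H.three_le; rw [Nat.even_sub (by omega)]; simp [H.even]) (x ^ a) (y ^ b)
  rwa [Nat.sub_add_cancel (by have := H.three_le; omega)] at h

theorem head_eq (H : BraidSetting X x y a b m) {e : G} {r : List G} (hr : Reduced X (e :: r))
    (hp : (e :: r).prod = altProd (x ^ a) (y ^ b) m) : e = x ^ a ∨ e = y ^ b := by
  rcases H.eq_of_reduced hr hp with h | h
  · rw [H.altList_eq_cons] at h; exact .inl (List.cons.inj h).1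
  · rw [H.swap.altList_eq_cons] at h; exact .inr (List.cons.inj h).1

theorem last_eq (H : BraidSetting X x y a b m) {e : G} {r : List G}
    (hr : Reduced X (r ++ [e])) (hp : (r ++ [e]).prod = altProd (x ^ a) (y ^ b) m) :
    e = y ^ b ∨ e = x ^ a := by
  rcases H.eq_of_reduced hr hp with h | h
  · rw [H.altList_eq_concat] at h
    exact .inl (List.singleton_inj.1 (List.append_inj' h rfl).2)
  · rw [H.swap.altList_eq_concat] at h
    exact .inr (List.singleton_inj.1 (List.append_inj' h rfl).2)

theorem reduced_of_inv_cons (H : BraidSetting X x y a b m) {h : G} {v : List G}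
    (hh : h ∈ Syll X) (hv : SylWord X v) (hvp : v.prod = h * altProd (x ^ a) (y ^ b) m)
    (hlen : v.length = m) (hs : h⁻¹ ≠ x ^ a) (ht : h⁻¹ ≠ y ^ b) : Reduced X v :=
  reduced_of_forall_inv_cons_ne hh hv hvp (hlen.trans H.braids.2.symm)
    fun _ hr hp => (H.head_eq hr hp).elim hs ht

theorem reduced_of_concat_inv (H : BraidSetting X x y a b m) {h : G} {v : List G}
    (hh : h ∈ Syll X) (hv : SylWord X v) (hvp : v.prod = altProd (x ^ a) (y ^ b) m * h)
    (hlen : v.length = m) (hs : h⁻¹ ≠ x ^ a) (ht : h⁻¹ ≠ y ^ b) : Reduced X v :=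
  reduced_of_forall_concat_inv_ne hh hv hvp (hlen.trans H.braids.2.symm)
    fun _ hr hp => (H.last_eq hr hp).elim ht hs

theorem sylWord_tail (H : BraidSetting X x y a b m) :
    SylWord X (altList (y ^ b) (x ^ a) (m - 1)) :=
  forall_mem_altList H.swap.zpow_left_mem_syll H.zpow_left_mem_syll _

theorem eq_of_reduced_of_mem (H : BraidSetting X x y a b m) {W r : List G} {e : G}
    (hW : Reduced X W)
    (hWx : ∀ f ∈ W, f ∈ altList (y ^ b) (x ^ a) (m - 1) ∨ f ∈ zpowers x)
    (hL : altList (y ^ b) (x ^ a) (m - 1) ⊆ W) (he : e ∈ W) (hes : e ≠ x ^ a)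
    (het : e ≠ y ^ b) (hr : Reduced X r) (hp : r.prod = W.prod) : r = W := by
  have hm := H.three_le
  refine hW.eq_of_prod_eq H.propertyD H.mem_left H.mem_right (fun f hf => ?_)
    (ne_altList_of_mem he (hL (left_mem_altList _ _ (by omega)))
      (hL (right_mem_altList _ _ (by omega))) het hes
      (H.zpow_ne_zpow H.zpow_left_ne_one H.zpow_right_ne_one).symm) hr hp
  rcases hWx f hf with hf | hf
  · exact forall_mem_altList (p := fun e => e ∈ zpowers x ∨ e ∈ zpowers y)
      (.inr (zpow_mem_zpowers y b)) (.inl (zpow_mem_zpowers x a)) _ f hf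
  · exact .inl hf

theorem prod_tail_mul (H : BraidSetting X x y a b m) :
    (altList (y ^ b) (x ^ a) (m - 1)).prod * x ^ a = altProd (x ^ a) (y ^ b) m := by
  rw [H.braids.1, altProd, H.swap.altList_eq_concat, List.prod_append, List.prod_singleton]

theorem mul_prod_tail (H : BraidSetting X x y a b m) :
    x ^ a * (altList (y ^ b) (x ^ a) (m - 1)).prod = altProd (x ^ a) (y ^ b) m := by
  rw [altProd, H.altList_eq_cons, List.prod_cons]

theorem commute_altProd (H : BraidSetting X x y a b m) :
    Commute (x ^ a) (altProd (x ^ a) (y ^ b) m) := by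
  show x ^ a * _ = _ * x ^ a
  conv_lhs => rw [← H.prod_tail_mul]
  rw [← mul_assoc, H.mul_prod_tail]

theorem not_braids (H : BraidSetting X x y a b m) {k : ℕ} (hk : 2 ≤ k) (hkm : k < m) :
    ¬ Braids X (y ^ b) (x ^ a) k :=
  not_braids_of_lt H.propertyD H.mem_left (zpow_mem_zpowers x a) H.reduced_altList hk hkm

theorem not_commute (H : BraidSetting X x y a b m) : ¬ Commute (x ^ a) (y ^ b) := fun h => by
  have := sylLen_altProd_le_two_of_commute H.mem_left H.mem_right (zpow_mem_zpowers x a)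
    (zpow_mem_zpowers y b) h m
  rw [H.braids.2] at this
  have := H.three_le
  omega

theorem ne_zpow_right (H : BraidSetting X x y a b m) {e : G} (he : e ∈ zpowers x)
    (he1 : e ≠ 1) : e ≠ y ^ b := by
  obtain ⟨n, rfl⟩ := mem_zpowers_iff.1 he
  exact H.zpow_ne_zpow he1 H.zpow_right_ne_one

theorem tail_eq_concat (H : BraidSetting X x y a b m) :
    altList (y ^ b) (x ^ a) (m - 1) = altList (y ^ b) (x ^ a) (m - 2) ++ [y ^ b] := by
  have hm := H.three_le
  have h := altList_succ_of_even (n := m - 2) (by rw [Nat.even_sub (by omega)]; simp [H.even])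
    (y ^ b) (x ^ a)
  rwa [show m - 2 + 1 = m - 1 by omega] at h

/-- If `s² ≠ 1`, then `s² t s ⋯ t` and `t s ⋯ t s²` are two reduced words of `g s = s g`,
although the first one admits no type II operation. -/
theorem zpow_mul_self_eq_one (H : BraidSetting X x y a b m) : x ^ a * x ^ a = 1 := by
  by_contra hs2
  have hm := H.three_le
  have hss : x ^ a * x ^ a ∈ zpowers x := mul_mem (zpow_mem_zpowers x a) (zpow_mem_zpowers x a)
  have hsyl : x ^ a * x ^ a ∈ Syll X := by
    rw [← zpow_add] at hs2 ⊢; exact zpow_mem_syll H.mem_left hs2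
  have hsns : x ^ a * x ^ a ≠ x ^ a := fun h => H.zpow_left_ne_one (mul_eq_left.1 h)
  have hp₂ : (altList (y ^ b) (x ^ a) (m - 1) ++ [x ^ a * x ^ a]).prod =
      altProd (x ^ a) (y ^ b) m * x ^ a := by
    rw [List.prod_append, List.prod_singleton, ← mul_assoc, H.prod_tail_mul]
  have hp₁ : (x ^ a * x ^ a :: altList (y ^ b) (x ^ a) (m - 1)).prod =
      altProd (x ^ a) (y ^ b) m * x ^ a := by
    rw [List.prod_cons, mul_assoc, H.mul_prod_tail, H.commute_altProd.eq]
  have hu₂ : Reduced X (altList (y ^ b) (x ^ a) (m - 1) ++ [x ^ a * x ^ a]) :=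
    H.reduced_of_concat_inv H.zpow_left_mem_syll (by simp [H.sylWord_tail, hsyl]) hp₂
      (by simp; omega) (fun h => hs2 (by rw [← inv_mul_cancel (x ^ a), h]))
      (H.ne_zpow_right (inv_mem (zpow_mem_zpowers x a)) (inv_ne_one.2 H.zpow_left_ne_one))
  have hu₁ : Reduced X (x ^ a * x ^ a :: altList (y ^ b) (x ^ a) (m - 1)) :=
    reduced_of_length_le (by simp [H.sylWord_tail, hsyl]) (by rw [hp₁, ← hp₂, ← hu₂.2]; simp)
  have h := H.eq_of_reduced_of_mem hu₁ (List.forall_mem_cons.2 ⟨.inr hss, fun f hf => .inl hf⟩)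
    (List.subset_cons_self _ _) List.mem_cons_self hsns (H.ne_zpow_right hss hs2) hu₂
    (hp₂.trans hp₁.symm)
  rw [altList_eq_cons_of_pos (by omega)] at h
  simp only [List.cons_append, List.cons.injEq] at h
  exact H.ne_zpow_right hss hs2 h.1.symm

theorem zpow_add_add (H : BraidSetting X x y a b m) (n : ℤ) : x ^ (a + a + n) = x ^ n := by
  rw [zpow_add, zpow_add, H.zpow_mul_self_eq_one, one_mul]

theorem zpow_succ_mul_zpow (H : BraidSetting X x y a b m) : x ^ (a + 1) * x ^ a = x := by
  rw [← zpow_add, show a + 1 + a = a + a + 1 by ring, H.zpow_add_add, zpow_one]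

theorem prod_tail_eq (H : BraidSetting X x y a b m) :
    (altList (y ^ b) (x ^ a) (m - 1)).prod = x ^ a * altProd (x ^ a) (y ^ b) m := by
  rw [← H.mul_prod_tail, ← mul_assoc, H.zpow_mul_self_eq_one, one_mul]

theorem zpow_pred_ne_one (H : BraidSetting X x y a b m) (hc : x ^ (a + 1) ≠ 1) :
    x ^ (a - 1) ≠ 1 := by
  intro h; apply hc
  rw [show a + 1 = a + a + -(a - 1) by ring, H.zpow_add_add, zpow_neg, h, inv_one]

theorem ne_zpow_left (H : BraidSetting X x y a b m) (hc : x ^ (a + 1) ≠ 1) : x ≠ x ^ a := by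
  intro h; apply H.zpow_pred_ne_one hc; rw [zpow_sub_one, ← h, mul_inv_cancel]

theorem zpow_succ_ne_zpow (H : BraidSetting X x y a b m) : x ^ (a + 1) ≠ x ^ a := fun h =>
  H.ne_one (by rwa [zpow_add_one, mul_eq_left] at h)

theorem prod_tail_concat (H : BraidSetting X x y a b m) :
    (altList (y ^ b) (x ^ a) (m - 1) ++ [x ^ (a - 1)]).prod =
      altProd (x ^ a) (y ^ b) m * x⁻¹ := by
  rw [List.prod_append, List.prod_singleton, ← H.prod_tail_mul, mul_assoc, zpow_sub_one]

theorem reduced_tail_concat (H : BraidSetting X x y a b m) (hc : x ^ (a + 1) ≠ 1) :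
    Reduced X (altList (y ^ b) (x ^ a) (m - 1) ++ [x ^ (a - 1)]) := by
  have hm := H.three_le
  refine H.reduced_of_concat_inv (inv_mem_syll H.mem_syll)
    (by simp [H.sylWord_tail, zpow_mem_syll H.mem_left (H.zpow_pred_ne_one hc)])
    H.prod_tail_concat (by simp; omega) ?_ ?_ <;> rw [inv_inv]
  · exact H.ne_zpow_left hc
  · exact H.ne_zpow_right (mem_zpowers x) H.ne_one

theorem sylLen_mul_inv (H : BraidSetting X x y a b m) (hc : x ^ (a + 1) ≠ 1) :
    sylLen X (altProd (x ^ a) (y ^ b) m * x⁻¹) = m := by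
  have h := (H.reduced_tail_concat hc).2
  rw [H.prod_tail_concat, List.length_append, altList_length, List.length_singleton] at h
  have := H.three_le
  omega

theorem eq_of_reduced_mul_inv (H : BraidSetting X x y a b m) (hc : x ^ (a + 1) ≠ 1)
    {r : List G} (hr : Reduced X r) (hp : r.prod = altProd (x ^ a) (y ^ b) m * x⁻¹) :
    r = altList (y ^ b) (x ^ a) (m - 1) ++ [x ^ (a - 1)] :=
  H.eq_of_reduced_of_mem (H.reduced_tail_concat hc)
    (List.forall_mem_append.2 ⟨fun _ hf => .inl hf,
      List.forall_mem_singleton.2 (.inr (zpow_mem_zpowers x _))⟩)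
    (List.subset_append_left _ _) (by simp)
    (fun h => H.ne_one (inv_eq_one.1 (mul_eq_left.1 (by rwa [zpow_sub_one] at h))))
    (H.ne_zpow_right (zpow_mem_zpowers x _) (H.zpow_pred_ne_one hc)) hr
    (hp.trans H.prod_tail_concat.symm)

theorem prod_cons_tail (H : BraidSetting X x y a b m) :
    (x :: altList (y ^ b) (x ^ a) (m - 1)).prod = x ^ (a + 1) * altProd (x ^ a) (y ^ b) m := by
  rw [List.prod_cons, H.prod_tail_eq, ← mul_assoc, ← zpow_one_add, add_comm]

theorem reduced_cons_tail (H : BraidSetting X x y a b m) (hc : x ^ (a + 1) ≠ 1) :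
    Reduced X (x :: altList (y ^ b) (x ^ a) (m - 1)) := by
  have hm := H.three_le
  refine H.reduced_of_inv_cons (zpow_mem_syll H.mem_left hc)
    (by simp [H.mem_syll, H.sylWord_tail]) H.prod_cons_tail (by simp; omega) ?_
    (H.ne_zpow_right (inv_mem (zpow_mem_zpowers x _)) (inv_ne_one.2 hc))
  intro h
  apply H.ne_one
  rw [← H.zpow_succ_mul_zpow, ← h, mul_inv_cancel]

theorem eq_of_reduced_zpow_succ_mul (H : BraidSetting X x y a b m) (hc : x ^ (a + 1) ≠ 1)
    {r : List G} (hr : Reduced X r) (hp : r.prod = x ^ (a + 1) * altProd (x ^ a) (y ^ b) m) :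
    r = x :: altList (y ^ b) (x ^ a) (m - 1) :=
  H.eq_of_reduced_of_mem (H.reduced_cons_tail hc)
    (List.forall_mem_cons.2 ⟨.inr (mem_zpowers x), fun _ hf => .inl hf⟩)
    (List.subset_cons_self _ _) List.mem_cons_self (H.ne_zpow_left hc)
    (H.ne_zpow_right (mem_zpowers x) H.ne_one) hr (hp.trans H.prod_cons_tail.symm)

/-- Otherwise `t s ⋯ t x` would be a second reduced word of `x^(a+1) g = g x^(a+1)`. -/
theorem not_commute_zpow_succ (H : BraidSetting X x y a b m) (hc : x ^ (a + 1) ≠ 1) :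
    ¬ Commute (x ^ (a + 1)) (y ^ b) := by
  intro hct
  have hm := H.three_le
  have hcg : Commute (x ^ (a + 1)) (altProd (x ^ a) (y ^ b) m) :=
    Commute.list_prod_right _ _ (forall_mem_altList (Commute.zpow_zpow_self x _ _) hct m)
  have hp : (altList (y ^ b) (x ^ a) (m - 1) ++ [x]).prod =
      x ^ (a + 1) * altProd (x ^ a) (y ^ b) m := by
    rw [List.prod_append, List.prod_singleton, hcg.eq, ← H.prod_tail_mul, mul_assoc,
      ← zpow_add, show a + (a + 1) = a + a + 1 by ring, H.zpow_add_add, zpow_one]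
  have hred : Reduced X (altList (y ^ b) (x ^ a) (m - 1) ++ [x]) :=
    reduced_of_length_le (by simp [H.sylWord_tail, H.mem_syll])
      (by rw [hp, ← H.prod_cons_tail, ← (H.reduced_cons_tail hc).2]; simp)
  have h := H.eq_of_reduced_zpow_succ_mul hc hred hp
  rw [altList_eq_cons_of_pos (by omega)] at h
  simp only [List.cons_append, List.cons.injEq] at h
  exact H.ne_zpow_right (mem_zpowers x) H.ne_one h.1.symm

theorem prod_conj_left (H : BraidSetting X x y a b m) :
    (x ^ (a + 1) :: (altList (y ^ b) (x ^ a) (m - 1) ++ [x⁻¹])).prod =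
      x * altProd (x ^ a) (y ^ b) m * x⁻¹ := by
  rw [List.prod_cons, List.prod_append, List.prod_singleton, H.prod_tail_eq, ← mul_assoc,
    ← mul_assoc, H.zpow_succ_mul_zpow]

theorem prod_conj_right (H : BraidSetting X x y a b m) :
    (x :: (altList (y ^ b) (x ^ a) (m - 1) ++ [x ^ (a - 1)])).prod =
      x * altProd (x ^ a) (y ^ b) m * x⁻¹ := by
  rw [List.prod_cons, H.prod_tail_concat, mul_assoc]

theorem sylWord_conj_left (H : BraidSetting X x y a b m) (hc : x ^ (a + 1) ≠ 1) :
    SylWord X (x ^ (a + 1) :: (altList (y ^ b) (x ^ a) (m - 1) ++ [x⁻¹])) := by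
  simp [zpow_mem_syll H.mem_left hc, H.sylWord_tail, inv_mem_syll H.mem_syll]

theorem sylWord_conj_right (H : BraidSetting X x y a b m) (hc : x ^ (a + 1) ≠ 1) :
    SylWord X (x :: (altList (y ^ b) (x ^ a) (m - 1) ++ [x ^ (a - 1)])) := by
  simp [H.mem_syll, H.sylWord_tail, zpow_mem_syll H.mem_left (H.zpow_pred_ne_one hc)]

/-- A shortening of `x (t s ⋯ t x^(a-1))` would give a reduced word of `g x⁻¹` starting with
`x⁻¹`, but `t s ⋯ t x^(a-1)` is its only reduced word. -/
theorem le_sylLen_conj (H : BraidSetting X x y a b m) (hc : x ^ (a + 1) ≠ 1) :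
    m ≤ sylLen X (x * altProd (x ^ a) (y ^ b) m * x⁻¹) := by
  by_contra hlt
  have hm := H.three_le
  obtain ⟨r, hr, hp⟩ := exists_reduced_inv_cons H.mem_syll (H.sylWord_conj_right hc)
    (by rw [H.prod_conj_right, mul_assoc]) (by rw [H.sylLen_mul_inv hc, ← mul_assoc]; omega)
  have h := H.eq_of_reduced_mul_inv hc hr hp
  rw [altList_eq_cons_of_pos (by omega)] at h
  simp only [List.cons_append, List.cons.injEq] at h
  exact H.ne_zpow_right (inv_mem (mem_zpowers x)) (inv_ne_one.2 H.ne_one) h.1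

theorem sylLen_conj_le (H : BraidSetting X x y a b m) (hc : x ^ (a + 1) ≠ 1) :
    sylLen X (x * altProd (x ^ a) (y ^ b) m * x⁻¹) ≤ m + 1 := by
  have h := sylLen_le_length (H.sylWord_conj_left hc)
  rw [H.prod_conj_left] at h
  simp only [List.length_cons, List.length_append, altList_length, List.length_nil] at h
  have := H.three_le
  omega

/-- Consecutive letters of `x^(a+1) t s ⋯ t x⁻¹` are neither mergeable nor braided: a braid
along `t s ⋯ t` is shorter than `m`, and the boundary pairs do not commute. -/
theorem not_MOp_conj_left (H : BraidSetting X x y a b m) (hc : x ^ (a + 1) ≠ 1)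
    {W : List G} : ¬ MOp X (x ^ (a + 1) :: (altList (y ^ b) (x ^ a) (m - 1) ++ [x⁻¹])) W := by
  have hm := H.three_le
  have hh : x ^ (a + 1) ∉ altList (y ^ b) (x ^ a) (m - 1) := fun h =>
    (mem_altList h).elim (H.ne_zpow_right (zpow_mem_zpowers x _) hc) H.zpow_succ_ne_zpow
  have hl : x⁻¹ ∉ altList (y ^ b) (x ^ a) (m - 1) := fun h =>
    (mem_altList h).elim (H.ne_zpow_right (inv_mem (mem_zpowers x))
      (inv_ne_one.2 H.ne_one)) fun h => hc (by rw [zpow_add_one, ← h, inv_mul_cancel])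
  have hlast : ∀ {p : G} {L₀ : List G}, altList (y ^ b) (x ^ a) (m - 1) = L₀ ++ [p] →
      p = y ^ b := fun h =>
    List.singleton_inj.1 (List.append_inj' (h.symm.trans H.tail_eq_concat) rfl).2
  have hx : x⁻¹ = x ^ (-1 : ℤ) := (zpow_neg_one x).symm
  rintro (⟨w₁, w₂, p, q, -, -, heq, hpq⟩ | ⟨w₁, w₂, p, q, k, -, -, hk, hb₁, hb₂, heq, -⟩)
  · replace hpq : p * q ∈ Syll X ∨ p * q = 1 := hpq.imp And.left And.left
    rcases segment_cases_of_eq_cons_altList_append (k := 2) (by omega) le_rfl hh hl heq with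
      ⟨-, ⟨rfl, rfl⟩ | ⟨rfl, rfl⟩⟩ | ⟨-, rfl, rfl⟩ | ⟨-, rfl, L₀, hL₀⟩
    · exact H.swap.not_mergeable H.zpow_right_ne_one H.zpow_left_ne_one hpq
    · exact H.not_mergeable H.zpow_left_ne_one H.zpow_right_ne_one hpq
    · exact H.not_mergeable hc H.zpow_right_ne_one hpq
    · rw [hlast hL₀, hx] at hpq
      exact H.swap.not_mergeable H.zpow_right_ne_one (hx ▸ inv_ne_one.2 H.ne_one) hpq
  · have hb : Braids X p q k := ⟨hb₁, hb₂⟩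
    rcases segment_cases_of_eq_cons_altList_append (by omega) hk hh hl heq with
      ⟨hkm, ⟨rfl, rfl⟩ | ⟨rfl, rfl⟩⟩ | ⟨rfl, rfl, rfl⟩ | ⟨rfl, rfl, L₀, hL₀⟩
    · exact H.not_braids hk (by omega) hb
    · exact H.not_braids hk (by omega) hb.symm
    · exact H.not_commute_zpow_succ hc hb.commute
    · rw [hlast hL₀] at hb
      exact H.not_commute ((Commute.inv_left_iff.1 hb.commute.symm).zpow_left a)

/-- The conjugate `x g x⁻¹` has syllabic length `m` or `m + 1`; in the first case the word
`x^(a+1) t s ⋯ t x⁻¹` is not M-reduced although no M-operation applies to it, in the second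
case it would be a reduced word differing from `x t s ⋯ t x^(a-1)` and admitting no flip. -/
theorem zpow_succ_eq_one (H : BraidSetting X x y a b m) : x ^ (a + 1) = 1 := by
  by_contra hc
  have hm := H.three_le
  have hA := H.sylWord_conj_left hc
  have hlen : (x ^ (a + 1) :: (altList (y ^ b) (x ^ a) (m - 1) ++ [x⁻¹])).length = m + 1 := by
    simp; omega
  rcases (show sylLen X (x * altProd (x ^ a) (y ^ b) m * x⁻¹) = m ∨
      sylLen X (x * altProd (x ^ a) (y ^ b) m * x⁻¹) = m + 1 by
    have := H.le_sylLen_conj hc; have := H.sylLen_conj_le hc; omega) with h | h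
  · have hnot : ¬ MReduced X (x ^ (a + 1) :: (altList (y ^ b) (x ^ a) (m - 1) ++ [x⁻¹])) :=
      fun hM => by
        have := ((H.propertyD.1 _ hA).2 hM).2
        rw [H.prod_conj_left, h, hlen] at this
        omega
    simp only [MReduced, not_forall, not_not] at hnot
    obtain ⟨W, hchain, hlt⟩ := hnot
    rcases hchain.cases_head with rfl | ⟨W', hop, -⟩
    · exact lt_irrefl _ hlt
    · exact H.not_MOp_conj_left hc hop
  · have hA' := reduced_of_length_le hA (by rw [H.prod_conj_left, h, hlen])
    have hB' := reduced_of_length_le (H.sylWord_conj_right hc)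
      (by rw [H.prod_conj_right, h]; simp; omega)
    have heq := H.eq_of_reduced_of_mem hA'
      (List.forall_mem_cons.2 ⟨.inr (zpow_mem_zpowers x _), List.forall_mem_append.2
        ⟨fun _ hf => .inl hf, List.forall_mem_singleton.2 (.inr (inv_mem (mem_zpowers x)))⟩⟩)
      (List.Subset.trans (List.subset_append_left _ _) (List.subset_cons_self _ _))
      List.mem_cons_self
      H.zpow_succ_ne_zpow (H.ne_zpow_right (zpow_mem_zpowers x _) hc) hB'
      (by rw [H.prod_conj_right, H.prod_conj_left])
    have hx := (List.cons.inj heq).1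
    rw [zpow_add_one, right_eq_mul] at hx
    exact H.zpow_left_ne_one hx

theorem orderOf_eq_two_and_modEq (H : BraidSetting X x y a b m) :
    orderOf x = 2 ∧ a ≡ 1 [ZMOD 2] := by
  have d₁ : (orderOf x : ℤ) ∣ a + a :=
    orderOf_dvd_iff_zpow_eq_one.2 (by rw [zpow_add]; exact H.zpow_mul_self_eq_one)
  have d₂ : (orderOf x : ℤ) ∣ a + 1 := orderOf_dvd_iff_zpow_eq_one.2 H.zpow_succ_eq_one
  have d : (orderOf x : ℤ) ∣ 2 := by
    simpa [show 2 * (a + 1) - (a + a) = 2 by ring] using dvd_sub (d₂.mul_left 2) d₁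
  have h₁ : orderOf x ≠ 1 := by rw [Ne, orderOf_eq_one_iff]; exact H.ne_one
  have h₀ : orderOf x ≠ 0 := fun h => by simp [h] at d
  have h₂ : (orderOf x : ℤ) ≤ 2 := Int.le_of_dvd two_pos d
  have ho : orderOf x = 2 := by omega
  refine ⟨ho, ?_⟩
  rw [ho, Nat.cast_ofNat] at d₂
  show a % 2 = 1 % 2
  omega

end BraidSetting

theorem statement_2_general {G : Type*} [Group G] {X : Set G}
    (hSM : StronglyMarked X) (hPD : PropertyD X)
    {x y : G} (hx : x ∈ X) (hy : y ∈ X) (hxy : x ≠ y)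
    {a b : ℤ} (ha : x ^ a ≠ 1) (hb : y ^ b ≠ 1)
    {m : ℕ} (hm : 3 ≤ m) (hmeven : Even m)
    (halt : altProd (x ^ a) (y ^ b) m = altProd (y ^ b) (x ^ a) m)
    (hlen : sylLen X (altProd (x ^ a) (y ^ b) m) = m) :
    orderOf x = 2 ∧ orderOf y = 2 ∧ a ≡ 1 [ZMOD (2 : ℤ)] ∧ b ≡ 1 [ZMOD (2 : ℤ)] := by
  have H : BraidSetting X x y a b m := ⟨hSM, hPD, hx, hy, hxy, ha, hb, hm, hmeven, halt, hlen⟩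
  obtain ⟨hox, hax⟩ := H.orderOf_eq_two_and_modEq
  obtain ⟨hoy, hby⟩ := H.swap.orderOf_eq_two_and_modEq
  exact ⟨hox, hoy, hax, hby⟩

theorem statement_2 {G : Type*} [Group G] {X : Set G}
    (hSM : StronglyMarked X) (hPD : PropertyD X)
    {x y : G} (hx : x ∈ X) (hy : y ∈ X) (hxy : x ≠ y)
    {a b : ℤ} (ha : x ^ a ≠ 1) (hb : y ^ b ≠ 1)
    {m : ℕ} (hm : 3 ≤ m) (hmeven : Even m) (hnc : x * y ≠ y * x)
    (halt : altProd (x ^ a) (y ^ b) m = altProd (y ^ b) (x ^ a) m)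
    (hlen : sylLen X (altProd (x ^ a) (y ^ b) m) = m) :
    orderOf x = 2 ∧ orderOf y = 2 ∧ a ≡ 1 [ZMOD (2 : ℤ)] ∧ b ≡ 1 [ZMOD (2 : ℤ)] :=
  statement_2_general hSM hPD hx hy hxy ha hb hm hmeven halt hlen

end Paper
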